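/- If every term of a polynomial h has a unique possible Janet reducer in a Janet autoreduced set F (uniqueness of Janet divisors), then the Janet normal form NF_J(h, F) is uniquely determined, i.e., any two terminating sequences of Janet reductions of h modulo F end with the same polynomial. -/

import Mathlib

open MvPolynomial

/-- Janet multiplicative variable for an exponent vector `u` with respect to a finite
set `U` of exponent vectors (variable order `x_1 ≻ … ≻ x_n`). -/
def JanetMult {n : ℕ} (U : Finset (Fin n →₀ ℕ)) (u : Fin n →₀ ℕ) (i : Fin n) : Prop :=
  u i = (U.filter (fun v => ∀ j, j < i → v j = u j)).sup (fun v => v i)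

/-- Janet divisibility: `u ∣ w` and all variables of `w/u` are Janet multiplicative. -/
def JanetDiv {n : ℕ} (U : Finset (Fin n →₀ ℕ)) (u w : Fin n →₀ ℕ) : Prop :=
  (∀ i, u i ≤ w i) ∧ ∀ i, u i < w i → JanetMult U u i

/-- Leading exponent of a polynomial with respect to a monomial order. -/
noncomputable def lmExp {K : Type*} [Field K] {n : ℕ} (M : MonomialOrder (Fin n))
    (p : MvPolynomial (Fin n) K) : Fin n →₀ ℕ :=
  M.toSyn.symm (p.support.sup M.toSyn)

/-- The set of leading exponents of a finite polynomial set. -/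
noncomputable def lmSet {K : Type*} [Field K] {n : ℕ} (M : MonomialOrder (Fin n))
    (F : Finset (MvPolynomial (Fin n) K)) : Finset (Fin n →₀ ℕ) :=
  F.image (lmExp M)

/-- One Janet reduction step modulo `F`: a term `t` of `h` having the leading
monomial of some `g ∈ F` as Janet divisor is eliminated by subtracting the
appropriate multiple of `g`. -/
noncomputable def JStep {K : Type*} [Field K] {n : ℕ} (M : MonomialOrder (Fin n))
    (F : Finset (MvPolynomial (Fin n) K)) (h h' : MvPolynomial (Fin n) K) : Prop :=
  ∃ g ∈ F, ∃ t ∈ h.support, JanetDiv (lmSet M F) (lmExp M g) t ∧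
    h' = h - monomial (t - lmExp M g) (h.coeff t / g.coeff (lmExp M g)) * g

/-- `F` is Janet autoreduced: no term of any `f ∈ F` has a Janet divisor among
the leading monomials of `F` other than `lm f`. -/
noncomputable def JanetAutoreduced {K : Type*} [Field K] {n : ℕ} (M : MonomialOrder (Fin n))
    (F : Finset (MvPolynomial (Fin n) K)) : Prop :=
  ∀ f ∈ F, ∀ t ∈ f.support, ∀ g ∈ F,
    lmExp M g ≠ lmExp M f → ¬ JanetDiv (lmSet M F) (lmExp M g) t

section Aux

variable {K : Type*} [Field K] {n : ℕ} (M : MonomialOrder (Fin n))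

lemma lmExp_mem_support {g : MvPolynomial (Fin n) K} (hg : g ≠ 0) :
    lmExp M g ∈ g.support := by
  have hne : g.support.Nonempty :=
    Finset.nonempty_iff_ne_empty.mpr (fun he => hg (support_eq_empty.mp he))
  obtain ⟨b, hb, hbe⟩ := Finset.exists_mem_eq_sup _ hne (fun t => M.toSyn t)
  unfold lmExp
  rw [hbe, AddEquiv.symm_apply_apply]
  exact hb

lemma le_lmExp {g : MvPolynomial (Fin n) K} {t : Fin n →₀ ℕ} (ht : t ∈ g.support) :
    M.toSyn t ≤ M.toSyn (lmExp M g) := by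
  unfold lmExp
  rw [AddEquiv.apply_symm_apply]
  exact Finset.le_sup ht

/-- The set of Janet-admissible multiples of elements of `F`. -/
def JMult (F : Finset (MvPolynomial (Fin n) K)) : Set (MvPolynomial (Fin n) K) :=
  {q | ∃ g ∈ F, ∃ t, JanetDiv (lmSet M F) (lmExp M g) t ∧
    q = monomial (t - lmExp M g) 1 * g}

lemma jstep_sub_mem_span {F : Finset (MvPolynomial (Fin n) K)}
    {a b : MvPolynomial (Fin n) K} (hab : JStep M F a b) :
    a - b ∈ Submodule.span K (JMult M F) := by
  obtain ⟨g, hg, t, ht, hdiv, hb⟩ := hab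
  have : a - b = (a.coeff t / g.coeff (lmExp M g)) • (monomial (t - lmExp M g) 1 * g) := by
    rw [hb, ← smul_mul_assoc, smul_monomial, smul_eq_mul, mul_one]
    ring
  rw [this]
  exact Submodule.smul_mem _ _ (Submodule.subset_span ⟨g, hg, t, hdiv, rfl⟩)

lemma jreds_sub_mem_span {F : Finset (MvPolynomial (Fin n) K)}
    {a b : MvPolynomial (Fin n) K} (hab : Relation.ReflTransGen (JStep M F) a b) :
    a - b ∈ Submodule.span K (JMult M F) := by
  induction hab with
  | refl => simp
  | tail _ hstep ih =>
      rename_i c d _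
      have : a - d = (a - c) + (c - d) := by ring
      rw [this]
      exact Submodule.add_mem _ ih (jstep_sub_mem_span M hstep)

lemma key_reducible {F : Finset (MvPolynomial (Fin n) K)}
    (h0 : (0 : MvPolynomial (Fin n) K) ∉ F)
    (huniq : ∀ t : Fin n →₀ ℕ, ∀ g ∈ F, ∀ g' ∈ F,
      JanetDiv (lmSet M F) (lmExp M g) t → JanetDiv (lmSet M F) (lmExp M g') t → g = g')
    {p : MvPolynomial (Fin n) K} (hp : p ∈ Submodule.span K (JMult M F)) (hp0 : p ≠ 0) :
    ∃ t ∈ p.support, ∃ g ∈ F, JanetDiv (lmSet M F) (lmExp M g) t := by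
  obtain ⟨c, hcS, hcsum⟩ := Submodule.mem_span_set.mp hp
  have hchoice : ∀ s : MvPolynomial (Fin n) K,
      ∃ gt : MvPolynomial (Fin n) K × (Fin n →₀ ℕ), s ∈ c.support →
        gt.1 ∈ F ∧ JanetDiv (lmSet M F) (lmExp M gt.1) gt.2 ∧
        s = monomial (gt.2 - lmExp M gt.1) 1 * gt.1 := by
    intro s
    by_cases hs : s ∈ c.support
    · obtain ⟨g, hgF, t, hdiv, hse⟩ := hcS hs
      exact ⟨(g, t), fun _ => ⟨hgF, hdiv, hse⟩⟩
    · exact ⟨(0, 0), fun h => absurd h hs⟩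
  choose gt hgt using hchoice
  set g : MvPolynomial (Fin n) K → MvPolynomial (Fin n) K := fun s => (gt s).1 with hgdef
  set τ : MvPolynomial (Fin n) K → (Fin n →₀ ℕ) := fun s => (gt s).2 with hτdef
  -- basic facts about each s in the support of c
  have hgF : ∀ s ∈ c.support, g s ∈ F := fun s hs => (hgt s hs).1
  have hdiv : ∀ s ∈ c.support, JanetDiv (lmSet M F) (lmExp M (g s)) (τ s) :=
    fun s hs => (hgt s hs).2.1
  have hse : ∀ s ∈ c.support, s = monomial (τ s - lmExp M (g s)) 1 * (g s) :=
    fun s hs => (hgt s hs).2.2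
  have hgne : ∀ s ∈ c.support, g s ≠ 0 := fun s hs h => h0 (h ▸ hgF s hs)
  have hle : ∀ s ∈ c.support, lmExp M (g s) ≤ τ s := by
    intro s hs
    exact Finsupp.le_def.mpr (hdiv s hs).1
  have hτadd : ∀ s ∈ c.support, (τ s - lmExp M (g s)) + lmExp M (g s) = τ s := by
    intro s hs
    exact tsub_add_cancel_of_le (hle s hs)
  -- coefficient of s at τ s is the leading coefficient of g s
  have hcoeffτ : ∀ s ∈ c.support, s.coeff (τ s) = (g s).coeff (lmExp M (g s)) := by
    intro s hs
    calc s.coeff (τ s)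
        = coeff ((τ s - lmExp M (g s)) + lmExp M (g s))
            (monomial (τ s - lmExp M (g s)) 1 * g s) := by
          rw [hτadd s hs, ← hse s hs]
      _ = coeff (lmExp M (g s)) (g s) := by rw [coeff_monomial_mul, one_mul]
  have hlcne : ∀ s ∈ c.support, (g s).coeff (lmExp M (g s)) ≠ 0 := by
    intro s hs
    exact mem_support_iff.mp (lmExp_mem_support M (hgne s hs))
  -- support of s is bounded by τ s
  have hbound : ∀ s ∈ c.support, ∀ u, s.coeff u ≠ 0 → M.toSyn u ≤ M.toSyn (τ s) := by
    intro s hs u hu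
    rw [hse s hs, coeff_monomial_mul'] at hu
    by_cases hvu : τ s - lmExp M (g s) ≤ u
    · rw [if_pos hvu, one_mul] at hu
      have hmem : u - (τ s - lmExp M (g s)) ∈ (g s).support := mem_support_iff.mpr hu
      have h1 : M.toSyn (u - (τ s - lmExp M (g s))) ≤ M.toSyn (lmExp M (g s)) :=
        le_lmExp M hmem
      have h2 : u = (τ s - lmExp M (g s)) + (u - (τ s - lmExp M (g s))) :=
        (add_tsub_cancel_of_le hvu).symm
      calc M.toSyn u
          = M.toSyn (τ s - lmExp M (g s)) + M.toSyn (u - (τ s - lmExp M (g s))) := by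
            rw [← map_add, ← h2]
        _ ≤ M.toSyn (τ s - lmExp M (g s)) + M.toSyn (lmExp M (g s)) := by
            exact add_le_add_right h1 _
        _ = M.toSyn (τ s) := by rw [← map_add, hτadd s hs]
    · rw [if_neg hvu] at hu
      exact absurd rfl hu
  -- c.support is nonempty
  have hcne : c.support.Nonempty := by
    by_contra hc
    apply hp0
    rw [← hcsum, Finsupp.sum]
    rw [Finset.not_nonempty_iff_eq_empty.mp hc]
    simp
  -- take the maximal τ
  obtain ⟨s₀, hs₀, hs₀max⟩ := Finset.exists_mem_eq_sup' hcne (fun s => M.toSyn (τ s))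
  have hmax : ∀ s ∈ c.support, M.toSyn (τ s) ≤ M.toSyn (τ s₀) := by
    intro s hs
    rw [← hs₀max]
    exact Finset.le_sup' (fun s => M.toSyn (τ s)) hs
  -- the coefficient of p at τ s₀ is nonzero
  have hpcoeff : p.coeff (τ s₀) ≠ 0 := by
    rw [← hcsum, Finsupp.sum, coeff_sum]
    have hzero : ∀ s ∈ c.support, s ≠ s₀ → coeff (τ s₀) (c s • s) = 0 := by
      intro s hs hne
      rw [coeff_smul]
      by_contra hne0
      have hcs : s.coeff (τ s₀) ≠ 0 := by
        intro h; apply hne0; rw [h]; simp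
      have h1 : M.toSyn (τ s₀) ≤ M.toSyn (τ s) := hbound s hs _ hcs
      have hττ : τ s = τ s₀ := M.toSyn.injective (le_antisymm (hmax s hs) h1)
      have hgg : g s = g s₀ := by
        apply huniq (τ s₀) (g s) (hgF s hs) (g s₀) (hgF s₀ hs₀)
        · rw [← hττ]; exact hdiv s hs
        · exact hdiv s₀ hs₀
      apply hne
      rw [hse s hs, hse s₀ hs₀, hgg, hττ]
    rw [Finset.sum_eq_single_of_mem s₀ hs₀ hzero, coeff_smul, smul_eq_mul,
      hcoeffτ s₀ hs₀]
    exact mul_ne_zero (Finsupp.mem_support_iff.mp hs₀) (hlcne s₀ hs₀)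
  exact ⟨τ s₀, mem_support_iff.mpr hpcoeff, g s₀, hgF s₀ hs₀, hdiv s₀ hs₀⟩

end Aux

/-- Uniqueness of the Janet normal form: if each monomial has at most one Janet
reducer in the Janet autoreduced set `F`, then any two terminating sequences of
Janet reductions of `h` modulo `F` end with the same polynomial. -/
theorem janet_normal_form_unique {K : Type*} [Field K] {n : ℕ}
    (M : MonomialOrder (Fin n)) (F : Finset (MvPolynomial (Fin n) K))
    (h0 : (0 : MvPolynomial (Fin n) K) ∉ F)
    (hauto : JanetAutoreduced M F)
    (huniq : ∀ t : Fin n →₀ ℕ, ∀ g ∈ F, ∀ g' ∈ F,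
      JanetDiv (lmSet M F) (lmExp M g) t → JanetDiv (lmSet M F) (lmExp M g') t → g = g')
    (h h₁ h₂ : MvPolynomial (Fin n) K)
    (hred₁ : Relation.ReflTransGen (JStep M F) h h₁)
    (hirr₁ : ∀ t ∈ h₁.support, ∀ g ∈ F, ¬ JanetDiv (lmSet M F) (lmExp M g) t)
    (hred₂ : Relation.ReflTransGen (JStep M F) h h₂)
    (hirr₂ : ∀ t ∈ h₂.support, ∀ g ∈ F, ¬ JanetDiv (lmSet M F) (lmExp M g) t) :
    h₁ = h₂ := by
  by_contra hne
  have hp : h₁ - h₂ ∈ Submodule.span K (JMult M F) := by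
    have : h₁ - h₂ = (h - h₂) - (h - h₁) := by ring
    rw [this]
    exact Submodule.sub_mem _ (jreds_sub_mem_span M hred₂) (jreds_sub_mem_span M hred₁)
  have hp0 : h₁ - h₂ ≠ 0 := sub_ne_zero.mpr hne
  obtain ⟨t, ht, g, hgF, hdiv⟩ := key_reducible M h0 huniq hp hp0
  have hct : (h₁ - h₂).coeff t ≠ 0 := mem_support_iff.mp ht
  rw [coeff_sub] at hct
  by_cases h1 : h₁.coeff t = 0
  · have h2 : h₂.coeff t ≠ 0 := by
      intro h; apply hct; rw [h1, h]; ring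
    exact hirr₂ t (mem_support_iff.mpr h2) g hgF hdiv
  · exact hirr₁ t (mem_support_iff.mpr h1) g hgF hdiv
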